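/- A more precise prior brings the average posterior mean closer to the prior mean (Proposition 3). Let f_ε be a log-concave density symmetric about 0. Let f_A and f_B be quasi-concave densities symmetric about the same mean μ such that f_A is less precise than f_B, i.e., x ↦ f_A(μ+x)/f_B(μ+x) is nondecreasing on (0,∞) (agent B has the more precise prior). For i ∈ {A,B}, define m_i(s) := (∫ x·f_i(x)·f_ε(s−x) dx)/(∫ f_i(x)·f_ε(s−x) dx), the posterior mean of agent i given signal realization s. Then for every state x ≥ μ: x ≥ ∫ m_A(s)·f_ε(s−x) ds ≥ ∫ m_B(s)·f_ε(s−x) ds ≥ μ, and for every x ≤ μ: x ≤ ∫ m_A(s)·f_ε(s−x) ds ≤ ∫ m_B(s)·f_ε(s−x) ds ≤ μ. -/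

import Mathlib

open MeasureTheory Real Set

noncomputable section

/-- A density: everywhere positive, continuously differentiable, integrates to 1,
with finite first absolute moment. -/
def IsDensity (f : ℝ → ℝ) : Prop :=
  (∀ x, 0 < f x) ∧ ContDiff ℝ 1 f ∧ (∫ x, f x) = 1 ∧
    MeasureTheory.Integrable (fun x => |x| * f x)

/-- `f` is symmetric about `m`. -/
def SymmAbout (m : ℝ) (f : ℝ → ℝ) : Prop := ∀ x, f (m + x) = f (m - x)

/-- `f` is quasi-concave. -/
def QuasiConcaveFn (f : ℝ → ℝ) : Prop :=
  ∀ x y t : ℝ, 0 ≤ t → t ≤ 1 → min (f x) (f y) ≤ f (t * x + (1 - t) * y)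

/-- `f` is log-concave. -/
def LogConcaveFn (f : ℝ → ℝ) : Prop := ConcaveOn ℝ Set.univ fun x => Real.log (f x)

/-- `g` is less precise than `f`: the ratio `g/f` is nondecreasing on `(0, ∞)`. -/
def LessPrecise (g f : ℝ → ℝ) : Prop := MonotoneOn (fun x => g x / f x) (Set.Ioi 0)

/-- Posterior mean at signal realization `s` under prior `fX` and noise density `fε`. -/
def postMean (fX fε : ℝ → ℝ) (s : ℝ) : ℝ :=
  (∫ x, x * fX x * fε (s - x)) / (∫ x, fX x * fε (s - x))

/-!
Folding at the prior mean `μ` turns every integral in the statement into an integral over `(0, ∞)`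
against `φ (a - u) ∓ φ (a + u)`, where `a ≥ 0` is the distance of the signal or of the state from
`μ`. All the inequalities then come from one fact: the convolution of an odd function that is
nonnegative on `(0, ∞)` with a symmetric unimodal function is nonnegative on `[0, ∞)`. Applied in
the signal it gives `μ ≤ m_i s ≤ s` for `s ≥ μ`; applied in the state to the functions `s - m_A s`,
`m_A s - m_B s` and `m_B s - μ`, which are odd about `μ`, it turns pointwise inequalities between
posterior means into inequalities between their averages. The pointwise comparison `m_B ≤ m_A` on
`[μ, ∞)` is Chebyshev's integral inequality for the nondecreasing likelihood ratio `f_A / f_B`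
against the folded weights, which are similarly ordered because the noise is log-concave. States
below `μ` follow by reflection about `μ`.
-/

def SymmUnimodal (φ : ℝ → ℝ) : Prop := ∀ ⦃a b : ℝ⦄, |a| ≤ |b| → φ b ≤ φ a

theorem SymmUnimodal.apply_neg {φ : ℝ → ℝ} (hφ : SymmUnimodal φ) (y : ℝ) : φ (-y) = φ y :=
  le_antisymm (hφ (abs_neg y).ge) (hφ (abs_neg y).le)

theorem QuasiConcaveFn.symmUnimodal {f : ℝ → ℝ} {m : ℝ} (hqc : QuasiConcaveFn f)
    (hsym : SymmAbout m f) : SymmUnimodal fun t => f (m + t) := by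
  intro a b hab
  rcases eq_or_ne b 0 with rfl | hb
  · rw [abs_zero, abs_nonpos_iff] at hab
    rw [hab]
  -- `m + a` is a convex combination of `m + b` and `m - b`, where `f` takes the same value
  obtain ⟨hr₁, hr₂⟩ : -1 ≤ a / b ∧ a / b ≤ 1 := by
    rw [← abs_le, abs_div, div_le_one (abs_pos.2 hb)]
    exact hab
  have key := hqc (m + b) (m - b) ((1 + a / b) / 2) (by linarith) (by linarith)
  rw [← hsym, min_self] at key
  convert key using 2
  field_simp
  ring

theorem LogConcaveFn.quasiConcaveFn {f : ℝ → ℝ} (hpos : ∀ x, 0 < f x) (h : LogConcaveFn f) :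
    QuasiConcaveFn f := by
  intro x y t ht₀ ht₁
  have := (quasiconcaveOn_iff_min_le.1 (h.quasiconcaveOn.monotone_comp exp_monotone)).2
    (mem_univ x) (mem_univ y) ht₀ (sub_nonneg.2 ht₁) (add_sub_cancel t 1)
  simpa [Function.comp_def, exp_log (hpos _)] using this

theorem SymmAbout.apply_two_mul_sub {f : ℝ → ℝ} {m : ℝ} (hsym : SymmAbout m f) (x : ℝ) :
    f (2 * m - x) = f x := by
  simpa [two_mul, add_sub_assoc] using hsym (m - x)

theorem ConcaveOn.map_add_sub_map_le_of_le {ℓ : ℝ → ℝ} (h : ConcaveOn ℝ univ ℓ) {x₁ x₂ δ : ℝ}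
    (hx : x₁ ≤ x₂) (hδ : 0 ≤ δ) : ℓ (x₂ + δ) - ℓ x₂ ≤ ℓ (x₁ + δ) - ℓ x₁ := by
  rcases hx.eq_or_lt with rfl | hx
  · rfl
  rcases hδ.eq_or_lt with rfl | hδ
  · simp
  -- `x₂` and `x₁ + δ` are the convex combinations of `x₁` and `x₂ + δ` with weights `1 - θ`, `θ`
  -- and `θ`, `1 - θ`
  set θ := (x₂ - x₁) / (x₂ - x₁ + δ)
  have hD : 0 < x₂ - x₁ + δ := by linarith
  have hθ : θ * (x₂ - x₁ + δ) = x₂ - x₁ := div_mul_cancel₀ _ hD.ne'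
  have hθ₀ : 0 ≤ θ := div_nonneg (by linarith) hD.le
  have hθ₁ : θ ≤ 1 := (div_le_one hD).2 (by linarith)
  have c₁ := h.2 (mem_univ x₁) (mem_univ (x₂ + δ)) (sub_nonneg.2 hθ₁) hθ₀ (sub_add_cancel 1 θ)
  have c₂ := h.2 (mem_univ x₁) (mem_univ (x₂ + δ)) hθ₀ (sub_nonneg.2 hθ₁) (add_sub_cancel θ 1)
  simp only [smul_eq_mul] at c₁ c₂
  rw [show (1 - θ) * x₁ + θ * (x₂ + δ) = x₂ by linear_combination hθ] at c₁
  rw [show θ * x₁ + (1 - θ) * (x₂ + δ) = x₁ + δ by linear_combination -hθ] at c₂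
  linarith

section LogConcave

variable {φ : ℝ → ℝ}

theorem LogConcaveFn.apply_add_mul_apply_sub_le (hlc : LogConcaveFn φ) (hpos : ∀ x, 0 < φ x)
    (heven : ∀ x, φ (-x) = φ x) {a u v : ℝ} (ha : 0 ≤ a) (hvu : v ≤ u) :
    φ (a + u) * φ (a - v) ≤ φ (a - u) * φ (a + v) := by
  have h := hlc.map_add_sub_map_le_of_le (x₁ := v - a) (x₂ := a + v) (δ := u - v)
    (by linarith) (by linarith)
  rw [show a + v + (u - v) = a + u by ring, show v - a + (u - v) = -(a - u) by ring,
    show v - a = -(a - v) by ring, heven, heven] at h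
  rw [← log_le_log_iff (mul_pos (hpos _) (hpos _)) (mul_pos (hpos _) (hpos _)),
    log_mul (hpos _).ne' (hpos _).ne', log_mul (hpos _).ne' (hpos _).ne']
  linarith

theorem LogConcaveFn.mul_sub_mul_add_le (hlc : LogConcaveFn φ) (hpos : ∀ x, 0 < φ x)
    (hφu : SymmUnimodal φ) {a u v : ℝ} (ha : 0 ≤ a) (hv : 0 ≤ v) (hvu : v ≤ u) :
    v * (φ (a - v) - φ (a + v)) * (φ (a - u) + φ (a + u)) ≤
      u * (φ (a - u) - φ (a + u)) * (φ (a - v) + φ (a + v)) := by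
  have h4 := hlc.apply_add_mul_apply_sub_le hpos hφu.apply_neg ha hvu
  have hΔ : φ (a + u) ≤ φ (a - u) := hφu <| by
    rw [abs_of_nonneg (by linarith : 0 ≤ a + u)]
    exact abs_sub_le_iff.2 ⟨by linarith, by linarith⟩
  have hsum := add_pos (hpos (a - v)) (hpos (a + v))
  -- with `D w = φ (a - w) - φ (a + w)` and `S w = φ (a - w) + φ (a + w)`, the difference of the
  -- two sides is `(u - v) D u S v + 2 v (φ (a - u) φ (a + v) - φ (a + u) φ (a - v))`
  nlinarith [mul_nonneg (mul_nonneg (sub_nonneg.2 hvu) (sub_nonneg.2 hΔ)) hsum.le,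
    mul_nonneg hv (sub_nonneg.2 h4)]

end LogConcave

theorem integral_id_mul_eq_zero {φ : ℝ → ℝ} (heven : ∀ y, φ (-y) = φ y) : ∫ y, y * φ y = 0 := by
  have h := integral_neg_eq_self (fun y => y * φ y) volume
  simp only [heven, neg_mul, integral_neg] at h
  linarith

namespace IsDensity

variable {f : ℝ → ℝ}

theorem continuous (hf : IsDensity f) : Continuous f := hf.2.1.continuous

theorem integrable (hf : IsDensity f) : Integrable f :=
  Integrable.of_integral_ne_zero (by rw [hf.2.2.1]; exact one_ne_zero)

theorem integrable_id_mul (hf : IsDensity f) : Integrable fun x => x * f x := by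
  refine hf.2.2.2.mono' (continuous_id.mul hf.continuous).aestronglyMeasurable
    (ae_of_all _ fun x => ?_)
  rw [norm_mul, norm_eq_abs, norm_of_nonneg (hf.1 x).le]

theorem integral_comp_sub (hf : IsDensity f) (x : ℝ) : ∫ s, f (s - x) = 1 := by
  rw [integral_sub_right_eq_self f x, hf.2.2.1]

theorem integrable_id_mul_comp_sub (hf : IsDensity f) (x : ℝ) :
    Integrable fun s => s * f (s - x) :=
  ((hf.integrable_id_mul.comp_sub_right x).add ((hf.integrable.comp_sub_right x).const_mul x)).congr
    (ae_of_all _ fun s => by simp only [Pi.add_apply]; ring)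

theorem integral_id_mul_comp_sub (hf : IsDensity f) (heven : ∀ y, f (-y) = f y) (x : ℝ) :
    ∫ s, s * f (s - x) = x := by
  rw [← integral_add_right_eq_self _ x]
  simp only [add_sub_cancel_right, add_mul]
  rw [integral_add hf.integrable_id_mul (hf.integrable.const_mul x), integral_id_mul_eq_zero heven,
    integral_const_mul, hf.2.2.1]
  ring

end IsDensity

theorem integral_eq_setIntegral_Ioi_add_comp_neg {H : ℝ → ℝ} (hH : Integrable H) :
    ∫ t, H t = ∫ t in Ioi 0, (H t + H (-t)) := by
  rw [integral_add hH.integrableOn hH.comp_neg.integrableOn, integral_comp_neg_Ioi, neg_zero,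
    add_comm, intervalIntegral.integral_Iic_add_Ioi hH.integrableOn hH.integrableOn]

theorem integrableOn_Ioi_and_integral_eq_of_add_comp_neg {H F : ℝ → ℝ} (hH : Integrable H)
    (hF : ∀ t, H t + H (-t) = F t) : IntegrableOn F (Ioi 0) ∧ ∫ t, H t = ∫ t in Ioi 0, F t :=
  ⟨(hH.add hH.comp_neg).integrableOn.congr_fun (fun t _ => hF t) measurableSet_Ioi,
    (integral_eq_setIntegral_Ioi_add_comp_neg hH).trans
      (setIntegral_congr_fun measurableSet_Ioi fun t _ => hF t)⟩

theorem integral_mul_comp_sub_nonneg {G φ : ℝ → ℝ} (hG : ∀ t, G (-t) = -G t)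
    (hG₀ : ∀ t, 0 < t → 0 ≤ G t) (hφ : SymmUnimodal φ) {a : ℝ} (ha : 0 ≤ a)
    (hint : Integrable fun t => G t * φ (a - t)) : 0 ≤ ∫ t, G t * φ (a - t) := by
  rw [integral_eq_setIntegral_Ioi_add_comp_neg hint]
  refine setIntegral_nonneg measurableSet_Ioi fun t (ht : 0 < t) => ?_
  have hφt : φ (a + t) ≤ φ (a - t) := hφ <| by
    rw [abs_of_nonneg (by linarith : 0 ≤ a + t)]
    exact abs_sub_le_iff.2 ⟨by linarith, by linarith⟩
  rw [hG, sub_neg_eq_add]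
  nlinarith [hG₀ t ht]

theorem integral_mul_comp_sub_le_of_odd {g₁ g₂ φ : ℝ → ℝ} {μ x : ℝ} (hφu : SymmUnimodal φ)
    (h₁ : Integrable fun s => g₁ s * φ (s - x)) (h₂ : Integrable fun s => g₂ s * φ (s - x))
    (hodd : ∀ t, g₁ (μ - t) - g₂ (μ - t) = -(g₁ (μ + t) - g₂ (μ + t)))
    (hle : ∀ t, 0 < t → g₂ (μ + t) ≤ g₁ (μ + t)) (hx : μ ≤ x) :
    ∫ s, g₂ s * φ (s - x) ≤ ∫ s, g₁ s * φ (s - x) := by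
  have e : ∀ t, g₁ (μ + t) * φ (μ + t - x) - g₂ (μ + t) * φ (μ + t - x) =
      (g₁ (μ + t) - g₂ (μ + t)) * φ (x - μ - t) := fun t => by
    rw [show μ + t - x = -(x - μ - t) by ring, hφu.apply_neg]; ring
  have hint : Integrable fun t => (g₁ (μ + t) - g₂ (μ + t)) * φ (x - μ - t) :=
    ((h₁.sub h₂).comp_add_left μ).congr (ae_of_all _ fun t => by simp only [Pi.sub_apply, e])
  rw [← sub_nonneg, ← integral_sub h₁ h₂, ← integral_add_left_eq_self _ μ]
  simp only [e]
  refine integral_mul_comp_sub_nonneg (G := fun t => g₁ (μ + t) - g₂ (μ + t)) (fun t => ?_)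
    (fun t ht => sub_nonneg.2 (hle t ht)) hφu (sub_nonneg.2 hx) hint
  rw [← sub_eq_add_neg, hodd]

theorem setIntegral_mul_setIntegral_le_of_monotoneOn {α : Type*} [MeasurableSpace α]
    [LinearOrder α] {ν : Measure α} [SFinite ν] {s : Set α} {ρ d w : α → ℝ}
    (hs : MeasurableSet s) (hρ : MonotoneOn ρ s)
    (hdw : ∀ u ∈ s, ∀ v ∈ s, v ≤ u → d v * w u ≤ d u * w v)
    (hd : IntegrableOn d s ν) (hw : IntegrableOn w s ν)
    (hρd : IntegrableOn (fun u => ρ u * d u) s ν) (hρw : IntegrableOn (fun u => ρ u * w u) s ν) :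
    (∫ u in s, d u ∂ν) * (∫ u in s, ρ u * w u ∂ν) ≤
      (∫ u in s, ρ u * d u ∂ν) * (∫ u in s, w u ∂ν) := by
  have hpair : ∀ u ∈ s, ∀ v ∈ s, 0 ≤ (ρ u - ρ v) * (d u * w v - d v * w u) := by
    intro u hu v hv
    rcases le_total v u with h | h
    · exact mul_nonneg (sub_nonneg.2 (hρ hv hu h)) (sub_nonneg.2 (hdw u hu v hv h))
    · exact mul_nonneg_of_nonpos_of_nonpos (sub_nonpos.2 (hρ hu hv h))
        (sub_nonpos.2 (hdw v hv u hu h))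
  set νs := ν.restrict s
  have h₁ := hρd.mul_prod hw
  have h₂ := hρw.mul_prod hd
  have h₃ := hd.mul_prod hρw
  have h₄ := hw.mul_prod hρd
  -- integrating `hpair` over `s × s` gives twice the difference of the two sides
  have hnonneg : 0 ≤ ∫ z, (ρ z.1 - ρ z.2) * (d z.1 * w z.2 - d z.2 * w z.1) ∂νs.prod νs := by
    refine integral_nonneg_of_ae ?_
    rw [Measure.prod_restrict]
    filter_upwards [ae_restrict_mem (hs.prod hs)] with z hz
    exact hpair z.1 hz.1 z.2 hz.2
  have hexpand : ∫ z, (ρ z.1 - ρ z.2) * (d z.1 * w z.2 - d z.2 * w z.1) ∂νs.prod νs =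
      ∫ z, (ρ z.1 * d z.1 * w z.2 - ρ z.1 * w z.1 * d z.2 - d z.1 * (ρ z.2 * w z.2) +
        w z.1 * (ρ z.2 * d z.2)) ∂νs.prod νs :=
    integral_congr_ae (ae_of_all _ fun z => by ring)
  rw [hexpand, integral_add (f := fun z => ρ z.1 * d z.1 * w z.2 - ρ z.1 * w z.1 * d z.2 -
      d z.1 * (ρ z.2 * w z.2)) ((h₁.sub h₂).sub h₃) h₄,
    integral_sub (f := fun z => ρ z.1 * d z.1 * w z.2 - ρ z.1 * w z.1 * d z.2) (h₁.sub h₂) h₃,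
    integral_sub h₁ h₂, integral_prod_mul (fun u => ρ u * d u) w,
    integral_prod_mul (fun u => ρ u * w u) d, integral_prod_mul d (fun u => ρ u * w u),
    integral_prod_mul w (fun u => ρ u * d u)] at hnonneg
  linarith

section PosteriorMean

variable {f φ : ℝ → ℝ} {μ : ℝ}

theorem integrable_mul_comp_sub {g : ℝ → ℝ} (hg : Integrable g) (hφ : IsDensity φ)
    (hφu : SymmUnimodal φ) (s : ℝ) : Integrable fun x => g x * φ (s - x) :=
  hg.mul_bdd (hφ.continuous.comp (continuous_sub_left s)).aestronglyMeasurable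
    (ae_of_all _ fun x => by
      rw [norm_of_nonneg (hφ.1 _).le]
      exact hφu (by simp : |(0 : ℝ)| ≤ |s - x|))

theorem integral_mul_comp_sub_pos (hf : IsDensity f) (hφ : IsDensity φ)
    (hφu : SymmUnimodal φ) (s : ℝ) : 0 < ∫ x, f x * φ (s - x) :=
  integral_pos_of_integrable_nonneg_nonzero (x := 0)
    (hf.continuous.mul (hφ.continuous.comp (continuous_sub_left s)))
    (integrable_mul_comp_sub hf.integrable hφ hφu s)
    (fun x => (mul_pos (hf.1 x) (hφ.1 _)).le) (mul_pos (hf.1 0) (hφ.1 _)).ne'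

theorem measurable_postMean (hf : Measurable f) (hφ : Measurable φ) :
    Measurable (postMean f φ) := by
  have hK : Measurable fun s => ∫ x, f x * φ (s - x) :=
    (StronglyMeasurable.integral_prod_right' (f := fun p : ℝ × ℝ => f p.2 * φ (p.1 - p.2))
      (by fun_prop)).measurable
  have hN : Measurable fun s => ∫ x, x * f x * φ (s - x) :=
    (StronglyMeasurable.integral_prod_right' (f := fun p : ℝ × ℝ => p.2 * f p.2 * φ (p.1 - p.2))
      (by fun_prop)).measurable
  exact hN.div hK

theorem integrable_sub_mul_comp_sub (hf : IsDensity f) (hφ : IsDensity φ) (hφu : SymmUnimodal φ)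
    (c s : ℝ) : Integrable fun x => (x - c) * f x * φ (s - x) := by
  refine integrable_mul_comp_sub ?_ hφ hφu s
  exact (hf.integrable_id_mul.sub (hf.integrable.const_mul c)).congr
    (ae_of_all _ fun x => by simp only [Pi.sub_apply]; ring)

theorem integral_sub_mul_comp_sub (hf : IsDensity f) (hφ : IsDensity φ) (hφu : SymmUnimodal φ)
    (c s : ℝ) : ∫ x, (x - c) * f x * φ (s - x) =
      (∫ x, x * f x * φ (s - x)) - c * ∫ x, f x * φ (s - x) := by
  rw [← integral_const_mul, ← integral_sub (integrable_mul_comp_sub hf.integrable_id_mul hφ hφu s)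
    ((integrable_mul_comp_sub hf.integrable hφ hφu s).const_mul c)]
  exact integral_congr_ae (ae_of_all _ fun x => by ring)

theorem postMean_sub_eq (hf : IsDensity f) (hφ : IsDensity φ) (hφu : SymmUnimodal φ) (c s : ℝ) :
    postMean f φ s - c =
      (∫ x, (x - c) * f x * φ (s - x)) / ∫ x, f x * φ (s - x) := by
  rw [integral_sub_mul_comp_sub hf hφ hφu, postMean, sub_div,
    mul_div_cancel_right₀ _ (integral_mul_comp_sub_pos hf hφ hφu s).ne']

theorem le_postMean (hf : IsDensity f) (hsym : SymmAbout μ f) (hφ : IsDensity φ)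
    (hφu : SymmUnimodal φ) {s : ℝ} (hs : μ ≤ s) : μ ≤ postMean f φ s := by
  rw [← sub_nonneg, postMean_sub_eq hf hφ hφu]
  refine div_nonneg ?_ (integral_mul_comp_sub_pos hf hφ hφu s).le
  have hint := (integrable_sub_mul_comp_sub hf hφ hφu μ s).comp_add_left μ
  rw [← integral_add_left_eq_self _ μ]
  simp only [add_sub_cancel_left, sub_add_eq_sub_sub] at hint ⊢
  refine integral_mul_comp_sub_nonneg (G := fun t => t * f (μ + t)) (fun t => ?_)
    (fun t ht => mul_nonneg ht.le (hf.1 _).le) hφu (sub_nonneg.2 hs) hint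
  rw [← sub_eq_add_neg, ← hsym]
  ring

theorem postMean_le (hf : IsDensity f) (hsym : SymmAbout μ f) (hqc : QuasiConcaveFn f)
    (hφ : IsDensity φ) (hφu : SymmUnimodal φ) {s : ℝ} (hs : μ ≤ s) : postMean f φ s ≤ s := by
  rw [← sub_nonpos, postMean_sub_eq hf hφ hφu]
  refine div_nonpos_of_nonpos_of_nonneg ?_ (integral_mul_comp_sub_pos hf hφ hφu s).le
  have e : ∀ u, (s - u - s) * f (s - u) * φ (s - (s - u)) = -(u * φ u * f (μ + (s - μ - u))) :=
    fun u => by rw [sub_sub_cancel, show μ + (s - μ - u) = s - u by ring]; ring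
  have hint : Integrable fun u => u * φ u * f (μ + (s - μ - u)) :=
    ((integrable_sub_mul_comp_sub hf hφ hφu s s).comp_sub_left s).neg.congr
    (ae_of_all _ fun u => by simp only [Pi.neg_apply, e, neg_neg])
  rw [← integral_sub_left_eq_self _ volume s, integral_congr_ae (ae_of_all _ e), integral_neg,
    neg_nonpos]
  refine integral_mul_comp_sub_nonneg (G := fun u => u * φ u) (fun t => ?_)
    (fun t ht => mul_nonneg ht.le (hφ.1 _).le) (hqc.symmUnimodal hsym) (sub_nonneg.2 hs) hint
  rw [hφu.apply_neg]
  ring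

theorem postMean_reflect (hf : IsDensity f) (hsym : SymmAbout μ f) (hφ : IsDensity φ)
    (hφu : SymmUnimodal φ) (t : ℝ) : postMean f φ (μ - t) = 2 * μ - postMean f φ (μ + t) := by
  have e : ∀ x, μ - t - (2 * μ - x) = -(μ + t - x) := fun x => by ring
  have hK : ∫ x, f x * φ (μ - t - x) = ∫ x, f x * φ (μ + t - x) := by
    rw [← integral_sub_left_eq_self _ volume (2 * μ)]
    simp only [hsym.apply_two_mul_sub, e, hφu.apply_neg]
  have hD : ∫ x, (x - μ) * f x * φ (μ - t - x) = -∫ x, (x - μ) * f x * φ (μ + t - x) := by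
    rw [← integral_sub_left_eq_self _ volume (2 * μ), ← integral_neg]
    refine integral_congr_ae (ae_of_all _ fun x => ?_)
    simp only [hsym.apply_two_mul_sub, e, hφu.apply_neg]
    ring
  have h := postMean_sub_eq hf hφ hφu μ (μ - t)
  rw [hK, hD, neg_div, ← postMean_sub_eq hf hφ hφu] at h
  linarith

theorem abs_postMean_sub_le (hf : IsDensity f) (hsym : SymmAbout μ f) (hqc : QuasiConcaveFn f)
    (hφ : IsDensity φ) (hφu : SymmUnimodal φ) (s : ℝ) : |postMean f φ s - μ| ≤ |s - μ| := by
  rcases le_total μ s with hs | hs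
  · have := le_postMean hf hsym hφ hφu hs
    have := postMean_le hf hsym hqc hφ hφu hs
    rw [abs_of_nonneg (by linarith), abs_of_nonneg (by linarith)]
    linarith
  · obtain ⟨t, rfl⟩ : ∃ t, s = μ - t := ⟨μ - s, by ring⟩
    have := le_postMean hf hsym hφ hφu (s := μ + t) (by linarith)
    have := postMean_le hf hsym hqc hφ hφu (s := μ + t) (by linarith)
    rw [postMean_reflect hf hsym hφ hφu, abs_of_nonpos (by linarith), abs_of_nonpos (by linarith)]
    linarith

theorem integrable_postMean_mul_comp_sub (hf : IsDensity f) (hsym : SymmAbout μ f)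
    (hqc : QuasiConcaveFn f) (hφ : IsDensity φ) (hφu : SymmUnimodal φ) (x : ℝ) :
    Integrable fun s => postMean f φ s * φ (s - x) := by
  have hbound : Integrable fun s => (|μ| + |x - μ| + |s - x|) * φ (s - x) :=
    (((hφ.integrable.comp_sub_right x).const_mul (|μ| + |x - μ|)).add
      (hφ.2.2.2.comp_sub_right x)).congr (ae_of_all _ fun s => by simp only [Pi.add_apply]; ring)
  refine hbound.mono' ((measurable_postMean hf.continuous.measurable
    hφ.continuous.measurable).mul (hφ.continuous.measurable.comp
      (measurable_sub_const x))).aestronglyMeasurable (ae_of_all _ fun s => ?_)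
  rw [norm_mul, norm_eq_abs, norm_of_nonneg (hφ.1 _).le]
  refine mul_le_mul_of_nonneg_right ?_ (hφ.1 _).le
  have := abs_postMean_sub_le hf hsym hqc hφ hφu s
  have := abs_sub_abs_le_abs_sub (postMean f φ s) μ
  have := abs_sub_le s x μ
  linarith

theorem integral_postMean_mul_comp_sub_reflect (hf : IsDensity f) (hsym : SymmAbout μ f)
    (hqc : QuasiConcaveFn f) (hφ : IsDensity φ) (hφu : SymmUnimodal φ) (t : ℝ) :
    ∫ s, postMean f φ s * φ (s - (μ - t)) = 2 * μ - ∫ s, postMean f φ s * φ (s - (μ + t)) := by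
  have e : ∀ s, postMean f φ (2 * μ - s) * φ (2 * μ - s - (μ - t)) =
      2 * μ * φ (s - (μ + t)) - postMean f φ s * φ (s - (μ + t)) := fun s => by
    have := postMean_reflect hf hsym hφ hφu (s - μ)
    rw [show μ - (s - μ) = 2 * μ - s by ring, add_sub_cancel] at this
    rw [this, show 2 * μ - s - (μ - t) = -(s - (μ + t)) by ring, hφu.apply_neg]
    ring
  rw [← integral_sub_left_eq_self _ volume (2 * μ), integral_congr_ae (ae_of_all _ e),
    integral_sub ((hφ.integrable.comp_sub_right _).const_mul _)
      (integrable_postMean_mul_comp_sub hf hsym hqc hφ hφu _),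
    integral_const_mul, hφ.integral_comp_sub, mul_one]

theorem integral_mul_comp_sub_eq_setIntegral_Ioi (hf : IsDensity f) (hsym : SymmAbout μ f)
    (hφ : IsDensity φ) (hφu : SymmUnimodal φ) (s : ℝ) :
    IntegrableOn (fun u => f (μ + u) * (φ (s - μ - u) + φ (s - μ + u))) (Ioi 0) ∧
      ∫ x, f x * φ (s - x) = ∫ u in Ioi 0, f (μ + u) * (φ (s - μ - u) + φ (s - μ + u)) := by
  have hH := (integrable_mul_comp_sub hf.integrable hφ hφu s).comp_add_left μ
  rw [← integral_add_left_eq_self _ μ]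
  simp only [sub_add_eq_sub_sub] at hH ⊢
  refine integrableOn_Ioi_and_integral_eq_of_add_comp_neg hH fun t => ?_
  rw [← sub_eq_add_neg, ← hsym, sub_neg_eq_add]
  ring

theorem integral_sub_mul_comp_sub_eq_setIntegral_Ioi (hf : IsDensity f) (hsym : SymmAbout μ f)
    (hφ : IsDensity φ) (hφu : SymmUnimodal φ) (s : ℝ) :
    IntegrableOn (fun u => u * f (μ + u) * (φ (s - μ - u) - φ (s - μ + u))) (Ioi 0) ∧
      ∫ x, (x - μ) * f x * φ (s - x) =
        ∫ u in Ioi 0, u * f (μ + u) * (φ (s - μ - u) - φ (s - μ + u)) := by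
  have hH := (integrable_sub_mul_comp_sub hf hφ hφu μ s).comp_add_left μ
  rw [← integral_add_left_eq_self _ μ]
  simp only [add_sub_cancel_left, sub_add_eq_sub_sub] at hH ⊢
  refine integrableOn_Ioi_and_integral_eq_of_add_comp_neg hH fun t => ?_
  rw [← sub_eq_add_neg, ← hsym, sub_neg_eq_add]
  ring

end PosteriorMean

theorem postMean_le_postMean_of_lessPrecise {fA fB φ : ℝ → ℝ} {μ s : ℝ} (hfA : IsDensity fA)
    (hAsym : SymmAbout μ fA) (hfB : IsDensity fB) (hBsym : SymmAbout μ fB) (hφ : IsDensity φ)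
    (hφu : SymmUnimodal φ) (hlc : LogConcaveFn φ)
    (hprec : LessPrecise (fun t => fA (μ + t)) (fun t => fB (μ + t))) (hs : μ ≤ s) :
    postMean fB φ s ≤ postMean fA φ s := by
  obtain ⟨hwA, hKA⟩ := integral_mul_comp_sub_eq_setIntegral_Ioi hfA hAsym hφ hφu s
  obtain ⟨hwB, hKB⟩ := integral_mul_comp_sub_eq_setIntegral_Ioi hfB hBsym hφ hφu s
  obtain ⟨hdA, hDA⟩ := integral_sub_mul_comp_sub_eq_setIntegral_Ioi hfA hAsym hφ hφu s
  obtain ⟨hdB, hDB⟩ := integral_sub_mul_comp_sub_eq_setIntegral_Ioi hfB hBsym hφ hφu s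
  have ha : 0 ≤ s - μ := sub_nonneg.2 hs
  set a := s - μ
  have hdw : ∀ u ∈ Ioi (0 : ℝ), ∀ v ∈ Ioi (0 : ℝ), v ≤ u →
      v * fB (μ + v) * (φ (a - v) - φ (a + v)) * (fB (μ + u) * (φ (a - u) + φ (a + u))) ≤
        u * fB (μ + u) * (φ (a - u) - φ (a + u)) * (fB (μ + v) * (φ (a - v) + φ (a + v))) := by
    intro u _ v (hv : 0 < v) hvu
    have := hlc.mul_sub_mul_add_le hφ.1 hφu ha hv.le hvu
    have hBB := mul_pos (hfB.1 (μ + u)) (hfB.1 (μ + v))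
    nlinarith
  rw [← sub_le_sub_iff_right μ, postMean_sub_eq hfB hφ hφu, postMean_sub_eq hfA hφ hφu,
    div_le_div_iff₀ (integral_mul_comp_sub_pos hfB hφ hφu s)
      (integral_mul_comp_sub_pos hfA hφ hφu s), hKA, hKB, hDA, hDB]
  have hρ : ∀ u c, fA (μ + u) * c = fA (μ + u) / fB (μ + u) * (fB (μ + u) * c) := fun u c => by
    rw [← mul_assoc, div_mul_cancel₀ _ (hfB.1 _).ne']
  have hdρ : ∀ u, u * fA (μ + u) * (φ (a - u) - φ (a + u)) =
      fA (μ + u) / fB (μ + u) * (u * fB (μ + u) * (φ (a - u) - φ (a + u))) := fun u => by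
    rw [mul_comm u, mul_assoc, hρ]; ring
  rw [setIntegral_congr_fun measurableSet_Ioi fun u _ => hρ u _,
    setIntegral_congr_fun measurableSet_Ioi fun u _ => hdρ u]
  exact setIntegral_mul_setIntegral_le_of_monotoneOn measurableSet_Ioi hprec hdw hdB hwB
    (hdA.congr_fun (fun u _ => hdρ u) measurableSet_Ioi)
    (hwA.congr_fun (fun u _ => hρ u _) measurableSet_Ioi)

theorem average_postMean_chain {fA fB φ : ℝ → ℝ} {μ x : ℝ} (hfA : IsDensity fA)
    (hAsym : SymmAbout μ fA) (hAqc : QuasiConcaveFn fA) (hfB : IsDensity fB)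
    (hBsym : SymmAbout μ fB) (hBqc : QuasiConcaveFn fB) (hφ : IsDensity φ)
    (hφu : SymmUnimodal φ) (hlc : LogConcaveFn φ)
    (hprec : LessPrecise (fun t => fA (μ + t)) (fun t => fB (μ + t))) (hx : μ ≤ x) :
    (∫ s, postMean fA φ s * φ (s - x)) ≤ x ∧
      (∫ s, postMean fB φ s * φ (s - x)) ≤ ∫ s, postMean fA φ s * φ (s - x) ∧
      μ ≤ ∫ s, postMean fB φ s * φ (s - x) := by
  have hA := integrable_postMean_mul_comp_sub hfA hAsym hAqc hφ hφu x
  have hB := integrable_postMean_mul_comp_sub hfB hBsym hBqc hφ hφu x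
  have reflA := postMean_reflect hfA hAsym hφ hφu
  have reflB := postMean_reflect hfB hBsym hφ hφu
  refine ⟨?_, ?_, ?_⟩
  · have h := integral_mul_comp_sub_le_of_odd (g₁ := fun s => s) hφu
      (hφ.integrable_id_mul_comp_sub x) hA
      (fun t => by simp only [reflA]; ring)
      (fun t ht => postMean_le hfA hAsym hAqc hφ hφu (by linarith)) hx
    rwa [hφ.integral_id_mul_comp_sub hφu.apply_neg] at h
  · exact integral_mul_comp_sub_le_of_odd hφu hA hB (fun t => by rw [reflA, reflB]; ring)
      (fun t ht => postMean_le_postMean_of_lessPrecise hfA hAsym hfB hBsym hφ hφu hlc hprec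
        (by linarith)) hx
  · have h := integral_mul_comp_sub_le_of_odd (g₂ := fun _ => μ) hφu hB
      ((hφ.integrable.comp_sub_right x).const_mul μ) (fun t => by rw [reflB]; ring)
      (fun t ht => le_postMean hfB hBsym hφ hφu (by linarith)) hx
    rwa [integral_const_mul, hφ.integral_comp_sub, mul_one] at h

theorem prior_precision_average_posterior_general
    (fε fA fB : ℝ → ℝ) (μ : ℝ)
    (hfε : IsDensity fε) (hfεsym : SymmAbout 0 fε) (hfεlc : LogConcaveFn fε)
    (hfA : IsDensity fA) (hfAsym : SymmAbout μ fA) (hfAqc : QuasiConcaveFn fA)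
    (hfB : IsDensity fB) (hfBsym : SymmAbout μ fB) (hfBqc : QuasiConcaveFn fB)
    (hprec : MonotoneOn (fun x => fA (μ + x) / fB (μ + x)) (Set.Ioi 0)) :
    (∀ x, μ ≤ x →
        (∫ s, postMean fA fε s * fε (s - x)) ≤ x ∧
        (∫ s, postMean fB fε s * fε (s - x)) ≤ ∫ s, postMean fA fε s * fε (s - x) ∧
        μ ≤ ∫ s, postMean fB fε s * fε (s - x)) ∧
    (∀ x ≤ μ,
        x ≤ ∫ s, postMean fA fε s * fε (s - x) ∧
        (∫ s, postMean fA fε s * fε (s - x)) ≤ ∫ s, postMean fB fε s * fε (s - x) ∧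
        (∫ s, postMean fB fε s * fε (s - x)) ≤ μ) := by
  have hεu : SymmUnimodal fε := by
    simpa using (hfεlc.quasiConcaveFn hfε.1).symmUnimodal hfεsym
  have right : ∀ x, μ ≤ x → _ := fun x hx =>
    average_postMean_chain hfA hfAsym hfAqc hfB hfBsym hfBqc hfε hεu hfεlc hprec hx
  refine ⟨right, fun x hx => ?_⟩
  obtain ⟨t, rfl⟩ : ∃ t, x = μ - t := ⟨μ - x, by ring⟩
  obtain ⟨hA, hAB, hB⟩ := right (μ + t) (by linarith)
  rw [integral_postMean_mul_comp_sub_reflect hfA hfAsym hfAqc hfε hεu,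
    integral_postMean_mul_comp_sub_reflect hfB hfBsym hfBqc hfε hεu]
  exact ⟨by linarith, by linarith, by linarith⟩

/-- Proposition 3: a more precise prior brings the average posterior mean closer
to the prior mean. -/
theorem prior_precision_average_posterior
    (fε fA fB : ℝ → ℝ) (μ : ℝ)
    (hfε : IsDensity fε) (hfεsym : SymmAbout 0 fε) (hfεlc : LogConcaveFn fε)
    (hfA : IsDensity fA) (hfAsym : SymmAbout μ fA) (hfAqc : QuasiConcaveFn fA)
    (hfB : IsDensity fB) (hfBsym : SymmAbout μ fB) (hfBqc : QuasiConcaveFn fB)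
    (hμA : μ = ∫ x, x * fA x) (hμB : μ = ∫ x, x * fB x)
    (hprec : MonotoneOn (fun x => fA (μ + x) / fB (μ + x)) (Set.Ioi 0)) :
    (∀ x, μ ≤ x →
        (∫ s, postMean fA fε s * fε (s - x)) ≤ x ∧
        (∫ s, postMean fB fε s * fε (s - x)) ≤ ∫ s, postMean fA fε s * fε (s - x) ∧
        μ ≤ ∫ s, postMean fB fε s * fε (s - x)) ∧
    (∀ x ≤ μ,
        x ≤ ∫ s, postMean fA fε s * fε (s - x) ∧
        (∫ s, postMean fA fε s * fε (s - x)) ≤ ∫ s, postMean fB fε s * fε (s - x) ∧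
        (∫ s, postMean fB fε s * fε (s - x)) ≤ μ) :=
  prior_precision_average_posterior_general fε fA fB μ hfε hfεsym hfεlc hfA hfAsym hfAqc hfB hfBsym
    hfBqc hprec
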